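/- arXiv:2604.08681 — 3 statements merged into one kernel-verified Lean document; each statement's English description precedes it below -/
import Mathlib

section
/- Let K : H₁ → H₂ be a compact linear operator between Hilbert spaces with singular system (μ_n, φ_n, ψ_n), where μ_n > 0. Let r ∈ H₂. The equation K h = r has a solution h ∈ H₁ if and only if (a) r is orthogonal to the kernel of K*, and (b) Σ_n μ_n^{-2} |⟨r, ψ_n⟩|² < ∞. -/
open MeasureTheory RealInnerProductSpace

/-- Picard's theorem: Let K be a compact operator between Hilbert spaces with
singular system (μ_n, φ_n, ψ_n) (μ_n > 0, φ_n, ψ_n orthonormal, K φ_n = μ_n ψ_n,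
K* ψ_n = μ_n φ_n, and the ψ_n span the closure of the range of K). For r ∈ H₂, the
equation K h = r is solvable iff (a) r ⟂ ker K* and (b) Σ_n μ_n⁻² |⟨r, ψ_n⟩|² < ∞. -/
theorem stmt7 {H₁ H₂ : Type*}
    [NormedAddCommGroup H₁] [InnerProductSpace ℝ H₁] [CompleteSpace H₁]
    [NormedAddCommGroup H₂] [InnerProductSpace ℝ H₂] [CompleteSpace H₂]
    (K : H₁ →L[ℝ] H₂) (hK : IsCompactOperator K)
    (μ : ℕ → ℝ) (φ : ℕ → H₁) (ψ : ℕ → H₂)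
    (hμpos : ∀ n, 0 < μ n)
    (hφ : Orthonormal ℝ φ) (hψ : Orthonormal ℝ ψ)
    (hKφ : ∀ n, K (φ n) = μ n • ψ n)
    (hKadjψ : ∀ n, ContinuousLinearMap.adjoint K (ψ n) = μ n • φ n)
    (hspan : (Submodule.span ℝ (Set.range ψ)).topologicalClosure
      = (LinearMap.range (K : H₁ →ₗ[ℝ] H₂)).topologicalClosure)
    (r : H₂) :
    (∃ h : H₁, K h = r) ↔
      ((∀ g : H₂, ContinuousLinearMap.adjoint K g = 0 → ⟪r, g⟫ = 0) ∧
        Summable (fun n => ((μ n)⁻¹) ^ 2 * ⟪r, ψ n⟫ ^ 2)) := by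
  have hμne : ∀ n, μ n ≠ 0 := fun n => (hμpos n).ne'
  constructor
  · rintro ⟨h, rfl⟩
    constructor
    · intro g hg
      rw [← ContinuousLinearMap.adjoint_inner_right, hg, inner_zero_right]
    · have hsum := hφ.inner_products_summable (x := h)
      refine hsum.congr fun n => ?_
      have h1 : ⟪K h, ψ n⟫ = μ n * ⟪h, φ n⟫ := by
        rw [← ContinuousLinearMap.adjoint_inner_right, hKadjψ, inner_smul_right]
      rw [h1, Real.norm_eq_abs, sq_abs, real_inner_comm (φ n) h, mul_pow, ← mul_assoc,
        ← mul_pow, inv_mul_cancel₀ (hμne n), one_pow, one_mul]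
  · rintro ⟨horth, hsum⟩
    set a : ℕ → ℝ := fun n => (μ n)⁻¹ * ⟪r, ψ n⟫ with ha
    have hμa : ∀ n, a n * μ n = ⟪r, ψ n⟫ := fun n => by
      simp only [ha]
      rw [mul_comm ((μ n)⁻¹) _, mul_assoc, inv_mul_cancel₀ (hμne n), mul_one]
    have hsa : Summable fun n => ‖a n‖ ^ 2 := by
      refine hsum.congr fun n => ?_
      simp [ha, Real.norm_eq_abs, sq_abs, mul_pow]
    have hsummable : Summable (fun n => a n • φ n) := by
      have := (hφ.orthogonalFamily.summable_iff_norm_sq_summable a).2 hsa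
      simpa [LinearIsometry.toSpanSingleton_apply] using this
    set h : H₁ := ∑' n, a n • φ n with hh
    have hKh : HasSum (fun n => ⟪r, ψ n⟫ • ψ n) (K h) := by
      have := hsummable.hasSum.mapL K
      refine this.congr_fun fun n => ?_
      rw [ContinuousLinearMap.map_smul, hKφ n, smul_smul, hμa n]
    have hinner : ∀ m, ⟪ψ m, K h⟫ = ⟪r, ψ m⟫ := by
      intro m
      classical
      have h2 := hKh.mapL (innerSL ℝ (ψ m))
      have h3 : HasSum (fun n => if n = m then ⟪r, ψ m⟫ else 0) ⟪ψ m, K h⟫ := by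
        refine h2.congr_fun fun n => ?_
        simp only [innerSL_apply_apply, inner_smul_right]
        rcases eq_or_ne n m with rfl | hnm
        · simp [hψ.1 n, real_inner_self_eq_norm_sq]
        · simp [hψ.2 hnm.symm, hnm]
      have h4 : HasSum (fun n => if n = m then ⟪r, ψ m⟫ else 0) ⟪r, ψ m⟫ :=
        hasSum_ite_eq m _
      exact h3.unique h4
    have hrE : r ∈ (Submodule.span ℝ (Set.range ψ)).topologicalClosure := by
      rw [hspan, ← Submodule.orthogonal_orthogonal_eq_closure]
      intro v hv
      have hKv : ContinuousLinearMap.adjoint K v = 0 := by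
        rw [← @inner_self_eq_zero ℝ, ContinuousLinearMap.adjoint_inner_right]
        exact hv (K (ContinuousLinearMap.adjoint K v)) ⟨_, rfl⟩
      rw [real_inner_comm]
      exact horth v hKv
    have hKhE : K h ∈ (Submodule.span ℝ (Set.range ψ)).topologicalClosure := by
      rw [hspan]
      exact Submodule.le_topologicalClosure _ ⟨h, rfl⟩
    have hdE : r - K h ∈ (Submodule.span ℝ (Set.range ψ)).topologicalClosure :=
      Submodule.sub_mem _ hrE hKhE
    have hEle : (Submodule.span ℝ (Set.range ψ)).topologicalClosure ≤ (ℝ ∙ (r - K h))ᗮ := by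
      refine Submodule.topologicalClosure_minimal _ ?_ (Submodule.isClosed_orthogonal _)
      rw [Submodule.span_le]
      rintro _ ⟨m, rfl⟩
      rw [SetLike.mem_coe, Submodule.mem_orthogonal_singleton_iff_inner_right]
      rw [inner_sub_left, real_inner_comm (ψ m) (K h), hinner m, sub_self]
    have hd0 : r - K h = 0 := by
      have h6 := hEle hdE
      rw [Submodule.mem_orthogonal] at h6
      have h5 := h6 (r - K h) (Submodule.mem_span_singleton_self _)
      rwa [inner_self_eq_zero] at h5
    exact ⟨h, (sub_eq_zero.mp hd0).symm⟩
end

section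
/- Let K : H₁ → H₂ be a compact linear operator between Hilbert spaces with singular system (μ_n, φ_n, ψ_n), and let r ∈ H₂ satisfy r ∈ ker(K*)^⊥ and Σ_n μ_n^{-2} |⟨r, ψ_n⟩|² < ∞. Then h = Σ_n μ_n^{-1} ⟨r, ψ_n⟩ φ_n converges in H₁ and satisfies K h = r. -/
open MeasureTheory RealInnerProductSpace

private lemma closure_orth {E : Type*} [NormedAddCommGroup E] [InnerProductSpace ℝ E]
    (S : Submodule ℝ E) : S.topologicalClosureᗮ = Sᗮ := by
  refine le_antisymm (Submodule.orthogonal_le S.le_topologicalClosure) ?_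
  intro v hv
  rw [Submodule.mem_orthogonal]
  intro u hu
  have hu' : u ∈ Sᗮᗮ :=
    S.topologicalClosure_minimal S.le_orthogonal_orthogonal Sᗮ.isClosed_orthogonal hu
  rw [real_inner_comm]
  exact (Submodule.mem_orthogonal Sᗮ u).mp hu' v hv

/-- constructive Picard: With the same singular-system setup, if r ⟂ ker K*
and Σ_n μ_n⁻² |⟨r, ψ_n⟩|² < ∞, then the series h = Σ_n μ_n⁻¹ ⟨r, ψ_n⟩ φ_n converges in H₁
and its sum h satisfies K h = r. -/
theorem stmt8 {H₁ H₂ : Type*}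
    [NormedAddCommGroup H₁] [InnerProductSpace ℝ H₁] [CompleteSpace H₁]
    [NormedAddCommGroup H₂] [InnerProductSpace ℝ H₂] [CompleteSpace H₂]
    (K : H₁ →L[ℝ] H₂) (hK : IsCompactOperator K)
    (μ : ℕ → ℝ) (φ : ℕ → H₁) (ψ : ℕ → H₂)
    (hμpos : ∀ n, 0 < μ n)
    (hφ : Orthonormal ℝ φ) (hψ : Orthonormal ℝ ψ)
    (hKφ : ∀ n, K (φ n) = μ n • ψ n)
    (hKadjψ : ∀ n, ContinuousLinearMap.adjoint K (ψ n) = μ n • φ n)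
    (hspan : (Submodule.span ℝ (Set.range ψ)).topologicalClosure
      = (LinearMap.range (K : H₁ →ₗ[ℝ] H₂)).topologicalClosure)
    (r : H₂)
    (hperp : ∀ g : H₂, ContinuousLinearMap.adjoint K g = 0 → ⟪r, g⟫ = 0)
    (hpicard : Summable (fun n => ((μ n)⁻¹) ^ 2 * ⟪r, ψ n⟫ ^ 2)) :
    ∃ h : H₁, HasSum (fun n => ((μ n)⁻¹ * ⟪r, ψ n⟫) • φ n) h ∧ K h = r := by
  -- Step 1: the series defining h converges
  have hsummable : Summable (fun n => ((μ n)⁻¹ * ⟪r, ψ n⟫) • φ n) := by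
    rw [show (fun n => ((μ n)⁻¹ * ⟪r, ψ n⟫) • φ n)
        = fun n => (LinearIsometry.toSpanSingleton ℝ H₁ (hφ.1 n)) ((μ n)⁻¹ * ⟪r, ψ n⟫) from rfl]
    rw [hφ.orthogonalFamily.summable_iff_norm_sq_summable]
    simpa [mul_pow, sq_abs] using hpicard
  obtain ⟨h, hh⟩ := hsummable
  refine ⟨h, hh, ?_⟩
  -- Step 2: K h = Σ ⟪r, ψ n⟫ • ψ n
  have hKh : HasSum (fun n => ⟪r, ψ n⟫ • ψ n) (K h) := by
    have := hh.mapL K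
    convert this using 2 with n
    rw [ContinuousLinearMap.map_smul, hKφ n, smul_smul]
    congr 1
    field_simp [(hμpos n).ne']
  -- Step 3: ⟪ψ m, K h - r⟫ = 0 for all m
  have hinner : ∀ m, ⟪ψ m, K h - r⟫ = 0 := by
    intro m
    have h1 : HasSum (fun n => ⟪ψ m, ⟪r, ψ n⟫ • ψ n⟫) ⟪ψ m, K h⟫ :=
      hKh.mapL (innerSL ℝ (ψ m))
    have h2 : HasSum (fun n => ⟪ψ m, ⟪r, ψ n⟫ • ψ n⟫) ⟪r, ψ m⟫ := by
      have heq : (fun n => ⟪ψ m, ⟪r, ψ n⟫ • ψ n⟫)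
          = fun n => if n = m then ⟪r, ψ m⟫ else 0 := by
        funext n
        rw [real_inner_smul_right]
        rcases eq_or_ne n m with rfl | hnm
        · rw [if_pos rfl, real_inner_self_eq_norm_sq, hψ.1 n]
          ring
        · rw [if_neg hnm, hψ.2 (Ne.symm hnm), mul_zero]
      rw [heq]
      exact hasSum_ite_eq m _
    have := h1.unique h2
    rw [inner_sub_right, this, real_inner_comm, sub_self]
  -- Step 4: K h - r ∈ Eᗮ
  have hmemO : K h - r ∈ ((Submodule.span ℝ (Set.range ψ)).topologicalClosure)ᗮ := by
    rw [closure_orth, Submodule.mem_orthogonal]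
    intro u hu
    induction hu using Submodule.span_induction with
    | mem x hx => obtain ⟨m, rfl⟩ := hx; exact hinner m
    | zero => simp
    | add x y _ _ hx hy => rw [inner_add_left, hx, hy, add_zero]
    | smul c x _ hx => rw [inner_smul_left, hx, mul_zero]
  -- Step 5: K h ∈ E and r ∈ E
  have hKhE : K h ∈ (Submodule.span ℝ (Set.range ψ)).topologicalClosure := by
    rw [hspan]
    exact (LinearMap.range (K : H₁ →ₗ[ℝ] H₂)).le_topologicalClosure ⟨h, rfl⟩
  have hrE : r ∈ (Submodule.span ℝ (Set.range ψ)).topologicalClosure := by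
    rw [← Submodule.orthogonal_orthogonal_eq_closure, Submodule.mem_orthogonal]
    intro g hg
    have hg' : g ∈ (LinearMap.range (K : H₁ →ₗ[ℝ] H₂))ᗮ := by
      have heq : (Submodule.span ℝ (Set.range ψ))ᗮ
          = (LinearMap.range (K : H₁ →ₗ[ℝ] H₂))ᗮ := by
        rw [← closure_orth, hspan, closure_orth]
      rwa [heq] at hg
    have hadj : ContinuousLinearMap.adjoint K g = 0 := by
      rw [← inner_self_eq_zero (𝕜 := ℝ)]
      have := (Submodule.mem_orthogonal _ g).mp hg'
        (K (ContinuousLinearMap.adjoint K g)) ⟨ContinuousLinearMap.adjoint K g, rfl⟩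
      rw [ContinuousLinearMap.adjoint_inner_left]
      rwa [real_inner_comm] at this
    rw [real_inner_comm]
    exact hperp g hadj
  -- Step 6: conclude
  have hmem : K h - r ∈ (Submodule.span ℝ (Set.range ψ)).topologicalClosure
      ⊓ ((Submodule.span ℝ (Set.range ψ)).topologicalClosure)ᗮ :=
    ⟨Submodule.sub_mem _ hKhE hrE, hmemO⟩
  rw [Submodule.inf_orthogonal_eq_bot, Submodule.mem_bot, sub_eq_zero] at hmem
  exact hmem
end

section
/- Let O, W be random variables, φ₀, φ : ℝ → ℝ measurable, q a square-integrable function of W, and suppose q(W) = E[ξ(Y_j) | W] for some ξ and E[Y₁ − φ₀(Y_j) | W] = 0 almost surely. Define the score ψ(φ) = α(R)·φ(Y_j) + q(W)·(Y₁ − φ(Y_j)). If additionally E[α(R)·h(Y_j)] = E[q(W)·h(Y_j)] for all square-integrable functions h (the Riesz representation/debiasing property), then the Gateaux derivative of E[ψ(φ₀ + t·h)] in t at t = 0 is zero for every direction h: d/dt E[ψ(φ₀ + t·h)]|_{t=0} = E[α(R)·h(Y_j)] − E[q(W)·h(Y_j)] = 0. -/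
open MeasureTheory

/-! The score is affine in the perturbation size `t`, with slope `α(R)·h(Y_j) − q(W)·h(Y_j)`,
so its mean is differentiable with derivative `E[α(R)·h(Y_j)] − E[q(W)·h(Y_j)]`, which the
debiasing property makes vanish. -/

theorem hasDerivAt_integral_add_mul {Ω : Type*} [MeasurableSpace Ω] {μ : Measure Ω}
    {f g : Ω → ℝ} (hf : Integrable f μ) (hg : Integrable g μ) (t₀ : ℝ) :
    HasDerivAt (fun t : ℝ => ∫ ω, (f ω + t * g ω) ∂μ) (∫ ω, g ω ∂μ) t₀ := by
  have hlinear : (fun t : ℝ => ∫ ω, (f ω + t * g ω) ∂μ)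
      = fun t => (∫ ω, f ω ∂μ) + t * ∫ ω, g ω ∂μ := by
    funext t
    rw [integral_add hf (hg.const_mul t), integral_const_mul]
  rw [hlinear]
  simpa using (hasDerivAt_mul_const (∫ ω, g ω ∂μ)).const_add (∫ ω, f ω ∂μ)

theorem stmt16_general {Ω : Type*} [MeasureSpace Ω] (μ : Measure Ω)
    (Y₁ Yj W R : Ω → ℝ)
    (φ₀ α q : ℝ → ℝ)
    (hriesz : ∀ h : ℝ → ℝ, Measurable h →
      Integrable (fun ω => α (R ω) * h (Yj ω)) μ →
      Integrable (fun ω => q (W ω) * h (Yj ω)) μ →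
      ∫ ω, α (R ω) * h (Yj ω) ∂μ = ∫ ω, q (W ω) * h (Yj ω) ∂μ) :
    ∀ h : ℝ → ℝ, Measurable h →
      Integrable (fun ω => α (R ω) * φ₀ (Yj ω)) μ →
      Integrable (fun ω => α (R ω) * h (Yj ω)) μ →
      Integrable (fun ω => q (W ω) * Y₁ ω) μ →
      Integrable (fun ω => q (W ω) * φ₀ (Yj ω)) μ →
      Integrable (fun ω => q (W ω) * h (Yj ω)) μ →
      HasDerivAt
        (fun t : ℝ => ∫ ω,
          (α (R ω) * (φ₀ (Yj ω) + t * h (Yj ω))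
            + q (W ω) * (Y₁ ω - (φ₀ (Yj ω) + t * h (Yj ω)))) ∂μ)
        0 0 := by
  intro h hh hαφ₀ hαh hqY₁ hqφ₀ hqh
  have hderiv := hasDerivAt_integral_add_mul
    (f := fun ω => α (R ω) * φ₀ (Yj ω) + (q (W ω) * Y₁ ω - q (W ω) * φ₀ (Yj ω)))
    (g := fun ω => α (R ω) * h (Yj ω) - q (W ω) * h (Yj ω))
    (hαφ₀.add (hqY₁.sub hqφ₀)) (hαh.sub hqh) 0
  rw [integral_sub hαh hqh, hriesz h hh hαh hqh, sub_self] at hderiv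
  convert hderiv using 3 with t
  funext ω
  ring

/-- Neyman orthogonality: With score
ψ(φ) = α(R)·φ(Y_j) + q(W)·(Y₁ − φ(Y_j)), where q(W) = E[ξ(Y_j) | W],
E[Y₁ − φ₀(Y_j) | W] = 0 a.s., and the Riesz/debiasing property
E[α(R)·h(Y_j)] = E[q(W)·h(Y_j)] holds for all square-integrable directions h, the
Gateaux derivative of t ↦ E[ψ(φ₀ + t·h)] at t = 0 is zero for every direction h. -/
theorem stmt16 {Ω : Type*} [MeasureSpace Ω] (μ : Measure Ω) [IsProbabilityMeasure μ]
    (Y₁ Yj W R : Ω → ℝ) (hY₁ : Measurable Y₁) (hYj : Measurable Yj)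
    (hW : Measurable W) (hR : Measurable R)
    (φ₀ α q ξ : ℝ → ℝ) (hφ₀ : Measurable φ₀) (hα : Measurable α)
    (hqm : Measurable q) (hξ : Measurable ξ)
    (hq2 : MemLp (fun ω => q (W ω)) 2 μ)
    (hq : (fun ω => q (W ω)) =ᵐ[μ]
      μ[fun ω => ξ (Yj ω) | MeasurableSpace.comap W (borel ℝ)])
    (hbridge : μ[fun ω => Y₁ ω - φ₀ (Yj ω) | MeasurableSpace.comap W (borel ℝ)] =ᵐ[μ] 0)
    (hriesz : ∀ h : ℝ → ℝ, Measurable h →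
      Integrable (fun ω => α (R ω) * h (Yj ω)) μ →
      Integrable (fun ω => q (W ω) * h (Yj ω)) μ →
      ∫ ω, α (R ω) * h (Yj ω) ∂μ = ∫ ω, q (W ω) * h (Yj ω) ∂μ) :
    ∀ h : ℝ → ℝ, Measurable h →
      Integrable (fun ω => α (R ω) * φ₀ (Yj ω)) μ →
      Integrable (fun ω => α (R ω) * h (Yj ω)) μ →
      Integrable (fun ω => q (W ω) * Y₁ ω) μ →
      Integrable (fun ω => q (W ω) * φ₀ (Yj ω)) μ →
      Integrable (fun ω => q (W ω) * h (Yj ω)) μ →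
      HasDerivAt
        (fun t : ℝ => ∫ ω,
          (α (R ω) * (φ₀ (Yj ω) + t * h (Yj ω))
            + q (W ω) * (Y₁ ω - (φ₀ (Yj ω) + t * h (Yj ω)))) ∂μ)
        0 0 :=
  stmt16_general μ Y₁ Yj W R φ₀ α q hriesz
end
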